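/- Let S be a nonnegative real (n+1)×(n+1) matrix and C a real n×n matrix with s_{ij} ≥ |c_{ij}| for all 1 ≤ i,j ≤ n. Let 0 ≤ γ ≤ 1 and choose nonnegative reals φ⁽¹⁾_{n+1,i}, φ⁽²⁾_{n+1,i} with φ⁽¹⁾_{n+1,i} + φ⁽²⁾_{n+1,i} = s_{n+1,i} for i = 1,…,n. Then the (2n+1)×(2n+1) matrix M_γ built with 2×2 blocks [[ (s_{ij}+γc_{ij})/2, (s_{ij}−γc_{ij})/2 ],[ (s_{ij}−γc_{ij})/2, (s_{ij}+γc_{ij})/2 ]] for 1 ≤ i,j ≤ n, last column entries given by duplicating s_{i,n+1}, last row given by the φ-values, and (2n+1,2n+1) entry s_{n+1,n+1}, is nonnegative with eigenvalue multiset σ(S) ∪ γ·σ(C). -/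

import Mathlib

/-!
In the basis `e₍ⱼ,₀₎ + e₍ⱼ,₁₎`, `e_∗`, `e₍ⱼ,₀₎ - e₍ⱼ,₁₎` the matrix `M_γ` is block upper triangular
with diagonal blocks `S` and `γ C`: a block `[[a, b], [b, a]]` acts by `a + b = s_ij` on symmetric
and by `a - b = γ c_ij` on antisymmetric vectors, the last column is symmetric, and the last row
pairs with `e₍ⱼ,₀₎ + e₍ⱼ,₁₎` to `φ⁽¹⁾ + φ⁽²⁾ = s_{n+1,j}`. So `χ(M_γ) = χ(S) χ(γ C)`, and the roots
of `χ(γ C)` are those of `χ(C)` scaled by `γ`. Nonnegativity is `|γ c_ij| ≤ s_ij`.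
-/

open Matrix Polynomial

namespace Matrix

theorem charpoly_eq_of_mul_eq_mul {R m k : Type*} [CommRing R] [Fintype m] [Fintype k]
    [DecidableEq m] [DecidableEq k] (hcard : Fintype.card m = Fintype.card k)
    {M : Matrix m m R} {D : Matrix k k R} {Q : Matrix m k R} {P : Matrix k m R}
    (hQP : Q * P = 1) (hMQ : M * Q = Q * D) : M.charpoly = D.charpoly := by
  let e : m ≃ k := Fintype.equivOfCardEq hcard
  let U : (Matrix m m R)ˣ :=
    { val := Q.submatrix id e, inv := P.submatrix e id
      val_inv := by simpa using hQP
      inv_val := by rw [mul_eq_one_comm]; simpa using hQP }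
  have hMU : M * U.val = U.val * D.submatrix e e := by
    simp only [U, submatrix_mul_equiv, ← hMQ]
    simpa using (submatrix_mul M Q id id e Function.bijective_id).symm
  have hM : M = U.val * D.submatrix e e * U.val⁻¹ := by
    rw [← hMU, ← coe_units_inv, Matrix.mul_assoc, Units.mul_inv, Matrix.mul_one]
  rw [hM, charpoly_units_conj, ← e.symm_symm, ← reindex_apply, charpoly_reindex]

theorem charpoly_smul_comp_C_mul_X {R n : Type*} [CommRing R] [Fintype n] [DecidableEq n]
    (r : R) (A : Matrix n n R) :
    (r • A).charpoly.comp (C r * X) = C r ^ Fintype.card n * A.charpoly := by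
  have hcm : (charmatrix (r • A)).map (compRingHom (C r * X)) = C r • charmatrix A := by
    ext i j
    by_cases hij : i = j
    · subst hij; simp [mul_sub]
    · simp [hij]
  rw [charpoly, ← coe_compRingHom_apply, RingHom.map_det, RingHom.mapMatrix_apply, hcm, det_smul,
    charpoly]

theorem roots_charpoly_smul {K n : Type*} [Field K] [IsAlgClosed K] [Fintype n] [DecidableEq n]
    (r : K) (A : Matrix n n K) :
    (r • A).charpoly.roots = A.charpoly.roots.map (r * ·) := by
  rcases eq_or_ne r 0 with rfl | hr
  · have hcard : Multiset.card A.charpoly.roots = Fintype.card n := by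
      rw [← (IsAlgClosed.splits _).natDegree_eq_card_roots, charpoly_natDegree_eq_dim]
    simp [charpoly_zero, Multiset.map_const', hcard, Multiset.nsmul_singleton]
  · have := map_roots_comp_C_mul_X_add_C (r • A).charpoly r 0 hr.isUnit
    rw [C_0, add_zero, charpoly_smul_comp_C_mul_X, ← C_pow, roots_C_mul _ (pow_ne_zero _ hr)] at this
    simpa using this.symm

theorem roots_charpoly_map_of_charpoly_eq_mul {K L m n k : Type*} [Field K] [Field L]
    [Fintype m] [DecidableEq m] [Fintype n] [DecidableEq n] [Fintype k] [DecidableEq k]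
    (f : K →+* L) {M : Matrix m m K} {A : Matrix n n K} {B : Matrix k k K}
    (h : M.charpoly = A.charpoly * B.charpoly) :
    (M.map f).charpoly.roots = (A.map f).charpoly.roots + (B.map f).charpoly.roots := by
  rw [charpoly_map, h, Polynomial.map_mul, ← charpoly_map, ← charpoly_map,
    roots_mul (mul_ne_zero (charpoly_monic _).ne_zero (charpoly_monic _).ne_zero)]

end Matrix

def finSumUnitEquiv (n : ℕ) : Fin n ⊕ Unit ≃ Fin (n + 1) :=
  (finSuccEquivLast.trans (Equiv.optionEquivSumPUnit _)).symm

@[simp] lemma finSumUnitEquiv_inl (n : ℕ) (i : Fin n) :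
    finSumUnitEquiv n (.inl i) = i.castSucc := by
  simp [finSumUnitEquiv]

@[simp] lemma finSumUnitEquiv_inr (n : ℕ) (u : Unit) : finSumUnitEquiv n (.inr u) = Fin.last n := by
  simp [finSumUnitEquiv]

section OddOrderDoubling

variable {K : Type*} [Field K] {n : ℕ}

/-- The matrix `M_γ`: index `(i, p)` is row `2i + 1 + p` of the paper (`i` counted from `0`), and
`φ j p` is `φ⁽ᵖ⁺¹⁾_{n+1,j+1}`. -/
def oddOrderDoubling (S : Matrix (Fin (n + 1)) (Fin (n + 1)) K) (C : Matrix (Fin n) (Fin n) K)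
    (γ : K) (φ : Fin n → Fin 2 → K) : Matrix (Fin n × Fin 2 ⊕ Unit) (Fin n × Fin 2 ⊕ Unit) K :=
  of fun x y => match x, y with
    | .inl (i, p), .inl (j, q) =>
      if p = q then (S i.castSucc j.castSucc + γ * C i j) / 2
      else (S i.castSucc j.castSucc - γ * C i j) / 2
    | .inl (i, _), .inr _ => S i.castSucc (Fin.last n)
    | .inr _, .inl (j, q) => φ j q
    | .inr _, .inr _ => S (Fin.last n) (Fin.last n)

lemma oddOrderDoubling_nonneg [LinearOrder K] [IsStrictOrderedRing K]
    {S : Matrix (Fin (n + 1)) (Fin (n + 1)) K} {C : Matrix (Fin n) (Fin n) K} {γ : K}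
    {φ : Fin n → Fin 2 → K} (hS : ∀ i j, 0 ≤ S i j)
    (hC : ∀ i j, |C i j| ≤ S i.castSucc j.castSucc) (hγ₀ : 0 ≤ γ) (hγ₁ : γ ≤ 1)
    (hφ : ∀ i p, 0 ≤ φ i p) (x y : Fin n × Fin 2 ⊕ Unit) :
    0 ≤ oddOrderDoubling S C γ φ x y := by
  have hγC (i j : Fin n) : |γ * C i j| ≤ S i.castSucc j.castSucc :=
    calc |γ * C i j| = γ * |C i j| := by rw [abs_mul, abs_of_nonneg hγ₀]
      _ ≤ 1 * |C i j| := mul_le_mul_of_nonneg_right hγ₁ (abs_nonneg _)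
      _ ≤ _ := (one_mul _).trans_le (hC i j)
  rcases x with ⟨i, p⟩ | u <;> rcases y with ⟨j, q⟩ | v <;>
    simp only [oddOrderDoubling, of_apply]
  · obtain ⟨hlo, hhi⟩ := abs_le.mp (hγC i j)
    split_ifs <;> linarith
  all_goals simp only [hS, hφ]

variable (K n) in
def symmAntisymmBasis : Matrix (Fin n × Fin 2 ⊕ Unit) ((Fin n ⊕ Unit) ⊕ Fin n) K :=
  of fun x y => match x, y with
    | .inl (i, _), .inl (.inl j) => if i = j then 1 else 0
    | .inl _, .inl (.inr _) => 0
    | .inl (i, p), .inr j => if i = j then (if p = 0 then 1 else -1) else 0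
    | .inr _, .inl (.inl _) => 0
    | .inr _, .inl (.inr _) => 1
    | .inr _, .inr _ => 0

variable (K n) in
def symmAntisymmCoord : Matrix ((Fin n ⊕ Unit) ⊕ Fin n) (Fin n × Fin 2 ⊕ Unit) K :=
  of fun y x => match y, x with
    | .inl (.inl i), .inl (j, _) => if i = j then 2⁻¹ else 0
    | .inl (.inl _), .inr _ => 0
    | .inl (.inr _), .inl _ => 0
    | .inl (.inr _), .inr _ => 1
    | .inr i, .inl (j, q) => if i = j then (if q = 0 then 2⁻¹ else -2⁻¹) else 0
    | .inr _, .inr _ => 0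

variable [NeZero (2 : K)]

lemma symmAntisymmBasis_mul_coord : symmAntisymmBasis K n * symmAntisymmCoord K n = 1 := by
  ext (⟨i, p⟩ | u) (⟨j, q⟩ | v) <;>
    simp only [mul_apply, Fintype.sum_sum_type, symmAntisymmBasis, symmAntisymmCoord, of_apply]
  · by_cases hij : i = j
    · subst hij
      fin_cases p <;> fin_cases q <;> simp [← two_mul, two_ne_zero]
    · simp [hij]
  all_goals simp

lemma oddOrderDoubling_mul_symmAntisymmBasis (S : Matrix (Fin (n + 1)) (Fin (n + 1)) K)
    (C : Matrix (Fin n) (Fin n) K) (γ : K) {φ : Fin n → Fin 2 → K}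
    (hφ : ∀ i, φ i 0 + φ i 1 = S (Fin.last n) i.castSucc) :
    oddOrderDoubling S C γ φ * symmAntisymmBasis K n = symmAntisymmBasis K n *
      fromBlocks (S.submatrix (finSumUnitEquiv n) (finSumUnitEquiv n))
        (fromRows 0 (of fun _ j => φ j 0 - φ j 1)) 0 (γ • C) := by
  have block (a b : K) : (a + b) / 2 + (a - b) / 2 = a ∧ (a - b) / 2 + (a + b) / 2 = a ∧
      (a + b) / 2 - (a - b) / 2 = b ∧ (a - b) / 2 - (a + b) / 2 = -b := by
    refine ⟨?_, ?_, ?_, ?_⟩ <;> field_simp <;> ring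
  ext (⟨i, p⟩ | u) ((j | v) | j) <;> (try fin_cases p) <;>
    simp [mul_apply, Fintype.sum_sum_type, Fintype.sum_prod_type,
      Finset.sum_ite_eq', symmAntisymmBasis, oddOrderDoubling, ← sub_eq_add_neg, block, hφ]

lemma charpoly_oddOrderDoubling (S : Matrix (Fin (n + 1)) (Fin (n + 1)) K)
    (C : Matrix (Fin n) (Fin n) K) (γ : K) {φ : Fin n → Fin 2 → K}
    (hφ : ∀ i, φ i 0 + φ i 1 = S (Fin.last n) i.castSucc) :
    (oddOrderDoubling S C γ φ).charpoly = S.charpoly * (γ • C).charpoly := by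
  have hcard : Fintype.card (Fin n × Fin 2 ⊕ Unit) = Fintype.card ((Fin n ⊕ Unit) ⊕ Fin n) := by
    simp only [Fintype.card_sum, Fintype.card_prod, Fintype.card_fin, Fintype.card_unit]; ring
  rw [charpoly_eq_of_mul_eq_mul hcard symmAntisymmBasis_mul_coord
    (oddOrderDoubling_mul_symmAntisymmBasis S C γ hφ), charpoly_fromBlocks_zero₂₁,
    ← (finSumUnitEquiv n).symm_symm, ← reindex_apply, charpoly_reindex]

end OddOrderDoubling

/-- odd-order construction: the (2n+1)×(2n+1) matrix M_γ is nonnegative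
with eigenvalue multiset σ(S) ∪ γ·σ(C). -/
theorem stmt12 (n : ℕ) (S : Matrix (Fin (n + 1)) (Fin (n + 1)) ℝ)
    (hSnn : ∀ i j, 0 ≤ S i j)
    (C : Matrix (Fin n) (Fin n) ℝ)
    (h : ∀ i j : Fin n, |C i j| ≤ S i.castSucc j.castSucc)
    (γ : ℝ) (h0 : 0 ≤ γ) (h1 : γ ≤ 1)
    (φ : Fin n → Fin 2 → ℝ) (hφnn : ∀ i p, 0 ≤ φ i p)
    (hφ : ∀ i, φ i 0 + φ i 1 = S (Fin.last n) i.castSucc)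
    (M : Matrix (Fin n × Fin 2 ⊕ Unit) (Fin n × Fin 2 ⊕ Unit) ℝ)
    (hM1 : ∀ (i j : Fin n) (p q : Fin 2),
      M (Sum.inl (i, p)) (Sum.inl (j, q)) =
        if p = q then (S i.castSucc j.castSucc + γ * C i j) / 2
        else (S i.castSucc j.castSucc - γ * C i j) / 2)
    (hM2 : ∀ (i : Fin n) (p : Fin 2) (u : Unit),
      M (Sum.inl (i, p)) (Sum.inr u) = S i.castSucc (Fin.last n))
    (hM3 : ∀ (u : Unit) (j : Fin n) (q : Fin 2),
      M (Sum.inr u) (Sum.inl (j, q)) = φ j q)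
    (hM4 : ∀ u v : Unit, M (Sum.inr u) (Sum.inr v) = S (Fin.last n) (Fin.last n)) :
    (∀ u v, 0 ≤ M u v) ∧
      (M.map Complex.ofReal).charpoly.roots =
        (S.map Complex.ofReal).charpoly.roots +
          Multiset.map (fun z => (γ : ℂ) * z)
            ((C.map Complex.ofReal).charpoly.roots) := by
  obtain rfl : M = oddOrderDoubling S C γ φ := by
    ext (⟨i, p⟩ | u) (⟨j, q⟩ | v) <;> simp [oddOrderDoubling, hM1, hM2, hM3, hM4]
  refine ⟨oddOrderDoubling_nonneg hSnn h h0 h1 hφnn, ?_⟩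
  have hroots := roots_charpoly_map_of_charpoly_eq_mul Complex.ofRealHom
    (charpoly_oddOrderDoubling S C γ hφ)
  rwa [Matrix.map_smul' _ _ _ (map_mul Complex.ofRealHom), roots_charpoly_smul] at hroots
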